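/- arXiv:2308.14071 — 4 statements merged into one kernel-verified Lean document; each statement's English description precedes it below -/
import Mathlib

section
/- Let x* be a 1-2-1 feasible schedule (M = 1) with x*_p > 0 for every p ∈ 𝒫. For each path p, let θ̃_p = min over links (i,j) of p of θ_{ji} and λ̃_p = max over links (i,j) of p of λ_{ji}(x*). Then the schedule x̂ defined by x̂_p = min( x*_p , θ̃_p·x*_p/λ̃_p ) satisfies the passive-user constraint: λ_{ji}(x̂) ≤ θ_{ji} for every link (i,j). -/
/-!
Common formalization of 1-2-1 mmWave networks (Dogan–Cardone–Fragouli).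
A link is a directed edge `(i, j)` between natural-number node labels.
A path is identified with its (finite, nonempty) set of links.
-/

open Finset

abbrev Link := ℕ × ℕ

/-- Minimum of `f` over a finite set of links (0 on the empty set). -/
noncomputable def pathInf (f : Link → ℝ) (p : Finset Link) : ℝ :=
  if h : p.Nonempty then p.inf' h f else 0

/-- Maximum of `f` over a finite set of links (0 on the empty set). -/
noncomputable def pathSup (f : Link → ℝ) (p : Finset Link) : ℝ :=
  if h : p.Nonempty then p.sup' h f else 0

/-- Capacity of a path: the minimum link capacity along it. -/
noncomputable def pathCap (ℓ : Link → ℝ) : Finset Link → ℝ := pathInf ℓ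

/-- Induced activation time `λ_{ji}(x)` of link `e`. -/
noncomputable def linkTime (ℓ : Link → ℝ) (Ps : Finset (Finset Link))
    (x : Finset Link → ℝ) (e : Link) : ℝ :=
  ∑ p ∈ Ps with e ∈ p, x p * pathCap ℓ p / ℓ e

/-- Rate of a schedule `x`. -/
noncomputable def netRate (ℓ : Link → ℝ) (Ps : Finset (Finset Link))
    (x : Finset Link → ℝ) : ℝ :=
  ∑ p ∈ Ps, x p * pathCap ℓ p

/-- 1-2-1 feasibility for `M = 1`: a nonnegative schedule whose induced link
activation times sum to at most 1 on the links leaving (resp. entering) each node. -/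
def Feasible1 (E : Finset Link) (ℓ : Link → ℝ) (Ps : Finset (Finset Link))
    (x : Finset Link → ℝ) : Prop :=
  (∀ p ∈ Ps, 0 ≤ x p) ∧
  (∀ i : ℕ, ∑ e ∈ E with e.1 = i, linkTime ℓ Ps x e ≤ 1) ∧
  (∀ i : ℕ, ∑ e ∈ E with e.2 = i, linkTime ℓ Ps x e ≤ 1)

/-- The passive-user constraint: every link activation time is below its threshold. -/
def PassiveOK (E : Finset Link) (ℓ : Link → ℝ) (Ps : Finset (Finset Link))
    (θ : Link → ℝ) (x : Finset Link → ℝ) : Prop :=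
  ∀ e ∈ E, linkTime ℓ Ps x e ≤ θ e

/-- The 1-2-1 passive capacity: supremum of rates of feasible schedules
satisfying the passive-user constraint. -/
noncomputable def passiveCapacity (E : Finset Link) (ℓ : Link → ℝ)
    (Ps : Finset (Finset Link)) (θ : Link → ℝ) : ℝ :=
  sSup {r | ∃ x, Feasible1 E ℓ Ps x ∧ PassiveOK E ℓ Ps θ x ∧ netRate ℓ Ps x = r}

/-- The approximate capacity: supremum of rates of feasible schedules. -/
noncomputable def approxCapacity (E : Finset Link) (ℓ : Link → ℝ)
    (Ps : Finset (Finset Link)) : ℝ :=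
  sSup {r | ∃ x, Feasible1 E ℓ Ps x ∧ netRate ℓ Ps x = r}

/-- The schedule `x̂_p = min(x*_p, θ̃_p x*_p / λ̃_p)`, where `θ̃_p` is the minimum
threshold over the links of `p` and `λ̃_p` the maximum activation time `λ_{ji}(x*)`
over the links of `p`. -/
noncomputable def xhat (ℓ θ : Link → ℝ) (Ps : Finset (Finset Link))
    (x : Finset Link → ℝ) (p : Finset Link) : ℝ :=
  min (x p) (pathInf θ p * x p / pathSup (linkTime ℓ Ps x) p)

/-!
Scaling each path through a link `e` down by the factor `θ_e / λ_e(x*)` brings the activation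
time of `e` down to exactly `θ_e`, since `λ_e` is linear in the schedule. The schedule `x̂` scales
each path `p ∋ e` by at most `θ̃_p / λ̃_p ≤ θ_e / λ_e(x*)`, and `λ_e` is monotone in the schedule.
-/

section PathExtrema

variable {f : Link → ℝ} {p : Finset Link} {e : Link}

lemma pathInf_le (he : e ∈ p) : pathInf f p ≤ f e := by
  rw [pathInf, dif_pos ⟨e, he⟩]
  exact inf'_le f he

lemma le_pathSup (he : e ∈ p) : f e ≤ pathSup f p := by
  rw [pathSup, dif_pos ⟨e, he⟩]
  exact le_sup' f he

lemma pathInf_pos (hp : p.Nonempty) (hf : ∀ e ∈ p, 0 < f e) : 0 < pathInf f p := by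
  rw [pathInf, dif_pos hp]
  exact (lt_inf'_iff hp).mpr hf

end PathExtrema

section LinkTime

variable {ℓ : Link → ℝ} {Ps : Finset (Finset Link)} {e : Link}

lemma linkTime_const_mul (c : ℝ) (x : Finset Link → ℝ) :
    linkTime ℓ Ps (fun p => c * x p) e = c * linkTime ℓ Ps x e := by
  simp only [linkTime, mul_sum, mul_assoc, mul_div_assoc]

lemma linkTime_mono {y z : Finset Link → ℝ} (hℓe : 0 ≤ ℓ e)
    (hcap : ∀ p ∈ Ps, e ∈ p → 0 ≤ pathCap ℓ p) (hyz : ∀ p ∈ Ps, e ∈ p → y p ≤ z p) :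
    linkTime ℓ Ps y e ≤ linkTime ℓ Ps z e := by
  refine sum_le_sum fun p hp => ?_
  obtain ⟨hpPs, hep⟩ := mem_filter.mp hp
  have := hcap p hpPs hep
  have := hyz p hpPs hep
  gcongr

lemma linkTime_eq_zero_of_forall_not_mem (x : Finset Link → ℝ) (h : ∀ p ∈ Ps, e ∉ p) :
    linkTime ℓ Ps x e = 0 := by
  rw [linkTime, filter_false_of_mem h, sum_empty]

lemma linkTime_pos {x : Finset Link → ℝ} (hℓe : 0 < ℓ e)
    (hcap : ∀ p ∈ Ps, e ∈ p → 0 < pathCap ℓ p) (hx : ∀ p ∈ Ps, 0 < x p)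
    (h : ∃ p ∈ Ps, e ∈ p) : 0 < linkTime ℓ Ps x e := by
  obtain ⟨p, hpPs, hep⟩ := h
  refine sum_pos (fun q hq => ?_) ⟨p, mem_filter.mpr ⟨hpPs, hep⟩⟩
  obtain ⟨hqPs, heq⟩ := mem_filter.mp hq
  have := hx q hqPs
  have := hcap q hqPs heq
  positivity

end LinkTime

lemma xhat_le_mul {ℓ θ : Link → ℝ} {Ps : Finset (Finset Link)} {x : Finset Link → ℝ}
    {p : Finset Link} {e : Link} (hθe : 0 ≤ θ e) (he : e ∈ p) (hxp : 0 < x p)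
    (hL : 0 < linkTime ℓ Ps x e) :
    xhat ℓ θ Ps x p ≤ θ e / linkTime ℓ Ps x e * x p := by
  have hsup : linkTime ℓ Ps x e ≤ pathSup (linkTime ℓ Ps x) p := le_pathSup he
  calc xhat ℓ θ Ps x p ≤ pathInf θ p * x p / pathSup (linkTime ℓ Ps x) p := min_le_right _ _
    _ ≤ θ e * x p / linkTime ℓ Ps x e := by
      gcongr
      exact pathInf_le he
    _ = θ e / linkTime ℓ Ps x e * x p := mul_div_right_comm _ _ _

theorem stmt4_general (E : Finset Link) (ℓ θ : Link → ℝ)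
    (hℓ : ∀ e ∈ E, 0 < ℓ e) (Ps : Finset (Finset Link))
    (hpaths : ∀ p ∈ Ps, p.Nonempty ∧ p ⊆ E)
    (hθ : ∀ e ∈ E, 0 ≤ θ e ∧ θ e ≤ 1)
    (x : Finset Link → ℝ)
    (hxpos : ∀ p ∈ Ps, 0 < x p) :
    PassiveOK E ℓ Ps θ (xhat ℓ θ Ps x) := by
  intro e he
  have hθe := (hθ e he).1
  by_cases hused : ∃ p ∈ Ps, e ∈ p
  · have hcap : ∀ p ∈ Ps, e ∈ p → 0 < pathCap ℓ p := fun p hp _ =>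
      pathInf_pos (hpaths p hp).1 fun e' he' => hℓ e' ((hpaths p hp).2 he')
    have hL : 0 < linkTime ℓ Ps x e := linkTime_pos (hℓ e he) hcap hxpos hused
    calc linkTime ℓ Ps (xhat ℓ θ Ps x) e
        ≤ linkTime ℓ Ps (fun p => θ e / linkTime ℓ Ps x e * x p) e :=
          linkTime_mono (hℓ e he).le (fun p hp hep => (hcap p hp hep).le)
            fun p hp hep => xhat_le_mul hθe hep (hxpos p hp) hL
      _ = θ e := by rw [linkTime_const_mul, div_mul_cancel₀ _ hL.ne']
  · push Not at hused
    rw [linkTime_eq_zero_of_forall_not_mem _ hused]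
    exact hθe

/-- the schedule x̂ satisfies the passive-user constraint. -/
theorem stmt4 (E : Finset Link) (hE : E.Nonempty) (ℓ θ : Link → ℝ)
    (hℓ : ∀ e ∈ E, 0 < ℓ e) (Ps : Finset (Finset Link)) (hPs : Ps.Nonempty)
    (hpaths : ∀ p ∈ Ps, p.Nonempty ∧ p ⊆ E)
    (hθ : ∀ e ∈ E, 0 ≤ θ e ∧ θ e ≤ 1)
    (x : Finset Link → ℝ) (hx : Feasible1 E ℓ Ps x)
    (hxpos : ∀ p ∈ Ps, 0 < x p) :
    PassiveOK E ℓ Ps θ (xhat ℓ θ Ps x) :=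
  stmt4_general E ℓ θ hℓ Ps hpaths hθ x hxpos
end

section
/- (Theorem 1, M = 1, sufficiency) Assume unit link capacities (ℓ_{ji} = 1 for every link, so C_p = 1 for every path) and a uniform threshold θ_{ji} = θ ∈ (0,1] on every link. Let p_1, …, p_{H_e} ∈ 𝒫 be pairwise link-disjoint source–destination paths and let θ_c ∈ [0,1] satisfy H_e ≥ θ_c/θ. Then the schedule assigning activation time θ_c/H_e to each of p_1, …, p_{H_e} and 0 to every other path is 1-2-1 feasible (M = 1), satisfies the passive-user constraint, and has rate θ_c. -/
/-!
Common formalization of 1-2-1 mmWave networks (Dogan–Cardone–Fragouli).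
A link is a directed edge `(i, j)` between natural-number node labels.
A path is identified with its (finite, nonempty) set of links.
-/

open Finset

/-!
With unit capacities every path has capacity 1, so the activation time of a link is the total
time of the scheduled paths through it. The chosen paths are link-disjoint, so each link lies on
at most one of them and is active for at most `θc / He ≤ θ`. A simple path leaves and enters each
node at most once, so the load at a node is at most the total time `He · (θc / He) = θc ≤ 1`.
-/

namespace OneTwoOne

lemma pathInf_eq_of_forall_eq {f : Link → ℝ} {q : Finset Link} {c : ℝ} (hq : q.Nonempty)
    (hf : ∀ e ∈ q, f e = c) : pathInf f q = c := by
  rw [pathInf, dif_pos hq]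
  obtain ⟨e, he⟩ := hq
  exact le_antisymm ((inf'_le f he).trans_eq (hf e he)) (le_inf' _ _ fun b hb => (hf b hb).ge)

variable {E : Finset Link} {ℓ : Link → ℝ} {Ps : Finset (Finset Link)} {x : Finset Link → ℝ}

lemma linkTime_eq_sum_of_unit {e : Link} (hℓe : ℓ e = 1) (hcap : ∀ q ∈ Ps, pathCap ℓ q = 1) :
    linkTime ℓ Ps x e = ∑ q ∈ Ps with e ∈ q, x q := by
  refine sum_congr rfl fun q hq => ?_
  rw [hcap q (mem_filter.mp hq).1, hℓe, mul_one, div_one]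

lemma netRate_eq_sum_of_unit (hcap : ∀ q ∈ Ps, pathCap ℓ q = 1) :
    netRate ℓ Ps x = ∑ q ∈ Ps, x q :=
  sum_congr rfl fun q hq => by rw [hcap q hq, mul_one]

lemma sum_linkTime_filter_le_sum {β : Type*} [DecidableEq β] (g : Link → β) (i : β)
    (hℓ : ∀ e ∈ E, ℓ e = 1) (hcap : ∀ q ∈ Ps, pathCap ℓ q = 1) (hx0 : ∀ q ∈ Ps, 0 ≤ x q)
    (hsimple : ∀ q ∈ Ps, #{e ∈ q | g e = i} ≤ 1) :
    ∑ e ∈ E with g e = i, linkTime ℓ Ps x e ≤ ∑ q ∈ Ps, x q := by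
  have hswap : ∑ e ∈ E with g e = i, linkTime ℓ Ps x e
      = ∑ q ∈ Ps, #{e ∈ E | g e = i ∧ e ∈ q} * x q := by
    calc ∑ e ∈ E with g e = i, linkTime ℓ Ps x e
        = ∑ e ∈ E with g e = i, ∑ q ∈ Ps, if e ∈ q then x q else 0 :=
          sum_congr rfl fun e he => by
            rw [linkTime_eq_sum_of_unit (hℓ e (mem_filter.mp he).1) hcap, sum_filter]
      _ = ∑ q ∈ Ps, ∑ e ∈ E with g e = i, if e ∈ q then x q else 0 := sum_comm
      _ = _ := sum_congr rfl fun q _ => by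
            rw [← sum_filter, filter_filter, sum_const, nsmul_eq_mul]
  rw [hswap]
  refine sum_le_sum fun q hq => mul_le_of_le_one_left (hx0 q hq) ?_
  have hsub : {e ∈ E | g e = i ∧ e ∈ q} ⊆ {e ∈ q | g e = i} := fun e he => by
    simp only [mem_filter] at he ⊢
    exact ⟨he.2.2, he.2.1⟩
  exact_mod_cast (card_le_card hsub).trans (hsimple q hq)

lemma feasible1_of_sum_le_one (hℓ : ∀ e ∈ E, ℓ e = 1) (hcap : ∀ q ∈ Ps, pathCap ℓ q = 1)
    (hsimple : ∀ q ∈ Ps, ∀ i : ℕ, #{e ∈ q | e.1 = i} ≤ 1 ∧ #{e ∈ q | e.2 = i} ≤ 1)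
    (hx0 : ∀ q ∈ Ps, 0 ≤ x q) (hx1 : ∑ q ∈ Ps, x q ≤ 1) : Feasible1 E ℓ Ps x :=
  ⟨hx0,
    fun i => (sum_linkTime_filter_le_sum Prod.fst i hℓ hcap hx0
      fun q hq => (hsimple q hq i).1).trans hx1,
    fun i => (sum_linkTime_filter_le_sum Prod.snd i hℓ hcap hx0
      fun q hq => (hsimple q hq i).2).trans hx1⟩

def equalShare {ι : Type*} (p : ι → Finset Link) [DecidablePred fun q => ∃ k, q = p k] (t : ℝ)
    (q : Finset Link) : ℝ :=
  if ∃ k, q = p k then t else 0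

section equalShare

variable {ι : Type*} {p : ι → Finset Link} [DecidablePred fun q => ∃ k, q = p k] {t : ℝ}

lemma equalShare_nonneg (ht : 0 ≤ t) (q : Finset Link) : 0 ≤ equalShare p t q := by
  unfold equalShare
  split_ifs <;> [exact ht; exact le_rfl]

lemma sum_equalShare (s : Finset (Finset Link)) :
    ∑ q ∈ s, equalShare p t q = #{q ∈ s | ∃ k, q = p k} * t := by
  simp only [equalShare]
  rw [sum_ite, sum_const, sum_const_zero, add_zero, nsmul_eq_mul]

lemma sum_equalShare_of_injective [Fintype ι] (hp : Function.Injective p) (hpPs : ∀ k, p k ∈ Ps) :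
    ∑ q ∈ Ps, equalShare p t q = Fintype.card ι * t := by
  have himage : {q ∈ Ps | ∃ k, q = p k} = univ.image p := by
    ext q
    simp only [mem_filter, mem_image, mem_univ, true_and]
    exact ⟨fun ⟨_, k, hk⟩ => ⟨k, hk.symm⟩, fun ⟨k, hk⟩ => ⟨hk ▸ hpPs k, k, hk.symm⟩⟩
  rw [sum_equalShare, himage, card_image_of_injective _ hp, card_univ]

lemma linkTime_equalShare_le (ht : 0 ≤ t) (hdisj : ∀ k l, k ≠ l → Disjoint (p k) (p l))
    {e : Link} (hℓe : ℓ e = 1) (hcap : ∀ q ∈ Ps, pathCap ℓ q = 1) :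
    linkTime ℓ Ps (equalShare p t) e ≤ t := by
  have hcard : #{q ∈ Ps | e ∈ q ∧ ∃ k, q = p k} ≤ 1 := by
    refine card_le_one.mpr fun q₁ h₁ q₂ h₂ => ?_
    obtain ⟨-, he₁, k, rfl⟩ := mem_filter.mp h₁
    obtain ⟨-, he₂, l, rfl⟩ := mem_filter.mp h₂
    by_contra hne
    exact disjoint_left.mp (hdisj k l fun hkl => hne (hkl ▸ rfl)) he₁ he₂
  rw [linkTime_eq_sum_of_unit hℓe hcap, sum_equalShare, filter_filter]
  exact mul_le_of_le_one_left ht (by exact_mod_cast hcard)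

end equalShare

end OneTwoOne

open OneTwoOne in
theorem stmt7_general (E : Finset Link) (ℓ : Link → ℝ)
    (hℓ : ∀ e ∈ E, ℓ e = 1) (Ps : Finset (Finset Link))
    (hpaths : ∀ q ∈ Ps, q.Nonempty ∧ q ⊆ E)
    -- each path is simple: at most one link of the path leaves/enters any node
    (hsimple : ∀ q ∈ Ps, ∀ i : ℕ,
      ({e ∈ q | e.1 = i}).card ≤ 1 ∧ ({e ∈ q | e.2 = i}).card ≤ 1)
    (θ : ℝ) (hθpos : 0 < θ)
    (He : ℕ) (hHe : 0 < He) (p : Fin He → Finset Link)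
    (hpPs : ∀ k, p k ∈ Ps) (hinj : Function.Injective p)
    (hdisj : ∀ k l, k ≠ l → Disjoint (p k) (p l))
    (θc : ℝ) (hθc0 : 0 ≤ θc) (hθc1 : θc ≤ 1)
    (hbound : θc / θ ≤ (He : ℝ)) :
    Feasible1 E ℓ Ps (fun q => if ∃ k, q = p k then θc / (He : ℝ) else 0) ∧
    PassiveOK E ℓ Ps (fun _ => θ) (fun q => if ∃ k, q = p k then θc / (He : ℝ) else 0) ∧
    netRate ℓ Ps (fun q => if ∃ k, q = p k then θc / (He : ℝ) else 0) = θc := by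
  change Feasible1 E ℓ Ps (equalShare p (θc / He)) ∧
    PassiveOK E ℓ Ps (fun _ => θ) (equalShare p (θc / He)) ∧
    netRate ℓ Ps (equalShare p (θc / He)) = θc
  have hHe' : (0 : ℝ) < He := Nat.cast_pos.mpr hHe
  have hcap : ∀ q ∈ Ps, pathCap ℓ q = 1 := fun q hq =>
    pathInf_eq_of_forall_eq (hpaths q hq).1 fun e he => hℓ e ((hpaths q hq).2 he)
  have ht0 : 0 ≤ θc / He := div_nonneg hθc0 hHe'.le
  have htθ : θc / He ≤ θ :=
    div_le_of_le_mul₀ hHe'.le hθpos.le (by rwa [div_le_iff₀ hθpos, mul_comm] at hbound)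
  have htotal : ∑ q ∈ Ps, equalShare p (θc / He) q = θc := by
    rw [sum_equalShare_of_injective hinj hpPs, Fintype.card_fin, mul_div_cancel₀ _ hHe'.ne']
  exact ⟨feasible1_of_sum_le_one hℓ hcap hsimple (fun q _ => equalShare_nonneg ht0 q)
      (htotal.trans_le hθc1),
    fun e he => (linkTime_equalShare_le ht0 hdisj (hℓ e he) hcap).trans htθ,
    (netRate_eq_sum_of_unit hcap).trans htotal⟩

/-- Theorem 1, M = 1, sufficiency: with unit link capacities and a
uniform threshold `θ`, given `H_e` pairwise link-disjoint paths and `θ_c ∈ [0,1]`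
with `H_e ≥ θ_c/θ`, equal time sharing `θ_c/H_e` over these paths is 1-2-1 feasible,
satisfies the passive-user constraint, and achieves rate `θ_c`. -/
theorem stmt7 (E : Finset Link) (hE : E.Nonempty) (ℓ : Link → ℝ)
    (hℓ : ∀ e ∈ E, ℓ e = 1) (Ps : Finset (Finset Link)) (hPs : Ps.Nonempty)
    (hpaths : ∀ q ∈ Ps, q.Nonempty ∧ q ⊆ E)
    -- each path is simple: at most one link of the path leaves/enters any node
    (hsimple : ∀ q ∈ Ps, ∀ i : ℕ,
      ({e ∈ q | e.1 = i}).card ≤ 1 ∧ ({e ∈ q | e.2 = i}).card ≤ 1)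
    (θ : ℝ) (hθpos : 0 < θ) (hθle : θ ≤ 1)
    (He : ℕ) (hHe : 0 < He) (p : Fin He → Finset Link)
    (hpPs : ∀ k, p k ∈ Ps) (hinj : Function.Injective p)
    (hdisj : ∀ k l, k ≠ l → Disjoint (p k) (p l))
    (θc : ℝ) (hθc0 : 0 ≤ θc) (hθc1 : θc ≤ 1)
    (hbound : θc / θ ≤ (He : ℝ)) :
    Feasible1 E ℓ Ps (fun q => if ∃ k, q = p k then θc / (He : ℝ) else 0) ∧
    PassiveOK E ℓ Ps (fun _ => θ) (fun q => if ∃ k, q = p k then θc / (He : ℝ) else 0) ∧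
    netRate ℓ Ps (fun q => if ∃ k, q = p k then θc / (He : ℝ) else 0) = θc :=
  stmt7_general E ℓ hℓ Ps hpaths hsimple θ hθpos He hHe p hpPs hinj hdisj θc hθc0 hθc1 hbound
end

section
/- (Theorem 1, M > 1) Assume unit link capacities (ℓ_{ji} = 1 for every link, so C_p = 1 for every path) and a uniform threshold θ_{ji} = θ ∈ (0,1] on every link. Let M ≥ 1 be an integer, let p_1, …, p_{H_v} ∈ 𝒫 be pairwise internally vertex-disjoint (hence pairwise link-disjoint) source–destination paths, and let θ_c ∈ [0,1] satisfy H_v ≥ (θ_c/θ)·min(M, H_v). Then the schedule assigning activation time θ_c·min(M, H_v)/H_v to each of p_1, …, p_{H_v} and 0 to every other path is 1-2-1 feasible for parameter M, satisfies the passive-user constraint, and has rate θ_c·min(M, H_v). -/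
/-!
Common formalization of 1-2-1 mmWave networks (Dogan–Cardone–Fragouli).
A link is a directed edge `(i, j)` between natural-number node labels.
A path is identified with its (finite, nonempty) set of links.
-/

open Finset

/-- 1-2-1 feasibility for general beam parameter `M` on an `Nrelay`-relay network with
source node `0` and destination node `Nrelay + 1`: the source may transmit on up to `M`
outgoing links and the destination receive on up to `M` incoming links simultaneously,
while each relay uses one transmit and one receive beam. -/
def FeasibleM (Nrelay M : ℕ) (E : Finset Link) (ℓ : Link → ℝ)
    (Ps : Finset (Finset Link)) (x : Finset Link → ℝ) : Prop :=
  (∀ p ∈ Ps, 0 ≤ x p) ∧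
  (∑ e ∈ E with e.1 = 0, linkTime ℓ Ps x e ≤ (M : ℝ)) ∧
  (∑ e ∈ E with e.2 = Nrelay + 1, linkTime ℓ Ps x e ≤ (M : ℝ)) ∧
  (∀ i : ℕ, 1 ≤ i → i ≤ Nrelay →
    (∑ e ∈ E with e.1 = i, linkTime ℓ Ps x e ≤ 1) ∧
    (∑ e ∈ E with e.2 = i, linkTime ℓ Ps x e ≤ 1))

/-- Node `v` appears in (the link set of) path `q`. -/
def nodeIn (v : ℕ) (q : Finset Link) : Prop := ∃ e ∈ q, e.1 = v ∨ e.2 = v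

/-!
With unit capacities every path has capacity 1, and since the chosen paths are link-disjoint,
every link carries the activation time `t = θ_c·min(M, H_v)/H_v` if it lies on one of them and
`0` otherwise. A path uses at most one link leaving (entering) any node, so the source and the
destination see at most `H_v` busy links, of total time `H_v·t = θ_c·min(M, H_v) ≤ M`, while
internal vertex-disjointness leaves at most one busy link at each side of a relay, of time
`t ≤ θ ≤ 1`. The bound `θ_c·min(M, H_v) ≤ θ·H_v` is exactly `t ≤ θ`.
-/

open Function

lemma pathCap_eq_one {ℓ : Link → ℝ} {q : Finset Link} (hq : q.Nonempty)
    (hℓ : ∀ e ∈ q, ℓ e = 1) : pathCap ℓ q = 1 := by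
  obtain ⟨a, ha⟩ := hq
  rw [pathCap, pathInf, dif_pos ⟨a, ha⟩]
  exact le_antisymm ((inf'_le ℓ ha).trans_eq (hℓ a ha))
    (le_inf' _ ℓ fun b hb => (hℓ b hb).ge)

section UniformSchedule

variable {n : ℕ} {p : Fin n → Finset Link} {t : ℝ}
  {ℓ : Link → ℝ} {Ps : Finset (Finset Link)}

variable (p t) in
def uniformSchedule : Finset Link → ℝ := fun q => if ∃ k, q = p k then t else 0

lemma linkTime_uniformSchedule (hPs : ∀ k, p k ∈ Ps) (hdisj : Pairwise (Disjoint on p))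
    (hcap : ∀ k, pathCap ℓ (p k) = 1) {e : Link} (he : ℓ e = 1) :
    linkTime ℓ Ps (uniformSchedule p t) e = if e ∈ univ.biUnion p then t else 0 := by
  have hoff : ∀ q, (¬ ∃ k, q = p k) → uniformSchedule p t q = 0 := fun q h => if_neg h
  rw [linkTime]
  by_cases hmem : e ∈ univ.biUnion p
  · obtain ⟨k, -, hk⟩ := mem_biUnion.mp hmem
    rw [if_pos hmem, sum_eq_single_of_mem (p k) (mem_filter.mpr ⟨hPs k, hk⟩)]
    · simp [uniformSchedule, hcap k, he]
    · rintro q hq hqk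
      rw [hoff q, zero_mul, zero_div]
      rintro ⟨l, rfl⟩
      exact disjoint_left.mp (hdisj fun hlk => hqk (congrArg p hlk)) (mem_filter.mp hq).2 hk
  · rw [if_neg hmem]
    refine sum_eq_zero fun q hq => ?_
    rw [hoff q, zero_mul, zero_div]
    rintro ⟨l, rfl⟩
    exact hmem (mem_biUnion.mpr ⟨l, mem_univ l, (mem_filter.mp hq).2⟩)

lemma sum_linkTime_uniformSchedule_le (hPs : ∀ k, p k ∈ Ps)
    (hdisj : Pairwise (Disjoint on p)) (hcap : ∀ k, pathCap ℓ (p k) = 1) (ht : 0 ≤ t)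
    {F : Finset Link} (hF : ∀ e ∈ F, ℓ e = 1) {c : ℕ} (hc : #(F ∩ univ.biUnion p) ≤ c) :
    ∑ e ∈ F, linkTime ℓ Ps (uniformSchedule p t) e ≤ c * t := by
  rw [sum_congr rfl fun e he => linkTime_uniformSchedule hPs hdisj hcap (hF e he),
    sum_ite_mem, sum_const, nsmul_eq_mul]
  gcongr

lemma card_inter_biUnion_le_card {F : Finset Link} (hF : ∀ k, #(F ∩ p k) ≤ 1) :
    #(F ∩ univ.biUnion p) ≤ n :=
  calc #(F ∩ univ.biUnion p) = #(univ.biUnion fun k => F ∩ p k) := by rw [inter_biUnion]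
    _ ≤ ∑ k, #(F ∩ p k) := card_biUnion_le
    _ ≤ ∑ _k : Fin n, 1 := sum_le_sum fun k _ => hF k
    _ = n := by simp

lemma card_inter_biUnion_le_one {v : ℕ}
    (hv : ∀ k l, k ≠ l → ¬(nodeIn v (p k) ∧ nodeIn v (p l))) {F : Finset Link}
    (hFv : ∀ e ∈ F, e.1 = v ∨ e.2 = v) (hF : ∀ k, #(F ∩ p k) ≤ 1) :
    #(F ∩ univ.biUnion p) ≤ 1 := by
  refine card_le_one.mpr fun a ha b hb => ?_
  obtain ⟨haF, hap⟩ := mem_inter.mp ha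
  obtain ⟨hbF, hbp⟩ := mem_inter.mp hb
  obtain ⟨k, -, hak⟩ := mem_biUnion.mp hap
  obtain ⟨l, -, hbl⟩ := mem_biUnion.mp hbp
  obtain rfl : k = l := by
    by_contra hkl
    exact hv k l hkl ⟨⟨a, hak, hFv a haF⟩, ⟨b, hbl, hFv b hbF⟩⟩
  exact card_le_one.mp (hF k) a (mem_inter.mpr ⟨haF, hak⟩) b (mem_inter.mpr ⟨hbF, hbl⟩)

lemma card_filter_inter_le_one {E q : Finset Link} {P : Link → Prop} [DecidablePred P]
    (hq : #(q.filter P) ≤ 1) : #(E.filter P ∩ q) ≤ 1 := by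
  rw [filter_inter]
  exact (card_le_card (filter_subset_filter P inter_subset_right)).trans hq

lemma feasibleM_uniformSchedule {Nrelay M : ℕ} {E : Finset Link} (hℓ : ∀ e ∈ E, ℓ e = 1)
    (hPs : ∀ k, p k ∈ Ps) (hdisj : Pairwise (Disjoint on p))
    (hcap : ∀ k, pathCap ℓ (p k) = 1)
    (hsimple : ∀ k i, #{e ∈ p k | e.1 = i} ≤ 1 ∧ #{e ∈ p k | e.2 = i} ≤ 1)
    (hvdisj : ∀ k l, k ≠ l → ∀ v : ℕ, v ≠ 0 → v ≠ Nrelay + 1 →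
      ¬(nodeIn v (p k) ∧ nodeIn v (p l)))
    (ht0 : 0 ≤ t) (ht1 : t ≤ 1) (htM : n * t ≤ M) :
    FeasibleM Nrelay M E ℓ Ps (uniformSchedule p t) := by
  have hsum {P : Link → Prop} [DecidablePred P] {c : ℕ}
      (hc : #((E.filter P) ∩ univ.biUnion p) ≤ c) :
      ∑ e ∈ E with P e, linkTime ℓ Ps (uniformSchedule p t) e ≤ c * t :=
    sum_linkTime_uniformSchedule_le hPs hdisj hcap ht0
      (fun e he => hℓ e (mem_filter.mp he).1) hc
  have hrelay {i : ℕ} (hi1 : 1 ≤ i) (hiN : i ≤ Nrelay) :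
      ∀ k l, k ≠ l → ¬(nodeIn i (p k) ∧ nodeIn i (p l)) :=
    fun k l hkl => hvdisj k l hkl i (by omega) (by omega)
  refine ⟨fun q _ => ?_, ?_, ?_, fun i hi1 hiN => ⟨?_, ?_⟩⟩
  · unfold uniformSchedule
    split_ifs <;> simp [ht0]
  · exact (hsum (card_inter_biUnion_le_card fun k =>
      card_filter_inter_le_one (hsimple k 0).1)).trans htM
  · exact (hsum (card_inter_biUnion_le_card fun k =>
      card_filter_inter_le_one (hsimple k (Nrelay + 1)).2)).trans htM
  · refine (hsum (card_inter_biUnion_le_one (hrelay hi1 hiN)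
      (fun e he => .inl (mem_filter.mp he).2)
      fun k => card_filter_inter_le_one (hsimple k i).1)).trans ?_
    simpa using ht1
  · refine (hsum (card_inter_biUnion_le_one (hrelay hi1 hiN)
      (fun e he => .inr (mem_filter.mp he).2)
      fun k => card_filter_inter_le_one (hsimple k i).2)).trans ?_
    simpa using ht1

lemma passiveOK_uniformSchedule {E : Finset Link} (hℓ : ∀ e ∈ E, ℓ e = 1)
    (hPs : ∀ k, p k ∈ Ps) (hdisj : Pairwise (Disjoint on p))
    (hcap : ∀ k, pathCap ℓ (p k) = 1) {θ : ℝ} (hθ : 0 ≤ θ) (htθ : t ≤ θ) :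
    PassiveOK E ℓ Ps (fun _ => θ) (uniformSchedule p t) := fun e he => by
  rw [linkTime_uniformSchedule hPs hdisj hcap (hℓ e he)]
  split_ifs
  exacts [htθ, hθ]

lemma netRate_uniformSchedule (hPs : ∀ k, p k ∈ Ps) (hinj : Injective p)
    (hcap : ∀ k, pathCap ℓ (p k) = 1) :
    netRate ℓ Ps (uniformSchedule p t) = n * t := by
  have hsupp : Ps.filter (fun q => ∃ k, q = p k) = univ.image p := by
    ext q
    simp only [mem_filter, mem_image, mem_univ, true_and]
    constructor
    · rintro ⟨-, k, rfl⟩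
      exact ⟨k, rfl⟩
    · rintro ⟨k, rfl⟩
      exact ⟨hPs k, k, rfl⟩
  simp only [netRate, uniformSchedule, ite_mul, zero_mul]
  rw [← sum_filter, hsupp, sum_image fun k _ l _ h => hinj h]
  simp [hcap]

end UniformSchedule

theorem stmt10_general (Nrelay : ℕ) (E : Finset Link) (ℓ : Link → ℝ)
    (hℓ : ∀ e ∈ E, ℓ e = 1) (Ps : Finset (Finset Link))
    (hpaths : ∀ q ∈ Ps, q.Nonempty ∧ q ⊆ E)
    (hsimple : ∀ q ∈ Ps, ∀ i : ℕ,
      ({e ∈ q | e.1 = i}).card ≤ 1 ∧ ({e ∈ q | e.2 = i}).card ≤ 1)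
    (θ : ℝ) (hθpos : 0 < θ) (hθle : θ ≤ 1)
    (M : ℕ)
    (Hv : ℕ) (hHv : 0 < Hv) (p : Fin Hv → Finset Link)
    (hpPs : ∀ k, p k ∈ Ps) (hinj : Function.Injective p)
    (hvdisj : ∀ k l, k ≠ l → ∀ v : ℕ, v ≠ 0 → v ≠ Nrelay + 1 →
      ¬(nodeIn v (p k) ∧ nodeIn v (p l)))
    (hldisj : ∀ k l, k ≠ l → Disjoint (p k) (p l))
    (θc : ℝ) (hθc0 : 0 ≤ θc) (hθc1 : θc ≤ 1)
    (hbound : θc / θ * (min M Hv : ℝ) ≤ (Hv : ℝ)) :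
    FeasibleM Nrelay M E ℓ Ps
      (fun q => if ∃ k, q = p k then θc * (min M Hv : ℝ) / (Hv : ℝ) else 0) ∧
    PassiveOK E ℓ Ps (fun _ => θ)
      (fun q => if ∃ k, q = p k then θc * (min M Hv : ℝ) / (Hv : ℝ) else 0) ∧
    netRate ℓ Ps
      (fun q => if ∃ k, q = p k then θc * (min M Hv : ℝ) / (Hv : ℝ) else 0)
      = θc * (min M Hv : ℝ) := by
  set m : ℝ := min (M : ℝ) (Hv : ℝ)
  set t : ℝ := θc * m / Hv
  have hHv' : (0 : ℝ) < Hv := by positivity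
  have hm0 : 0 ≤ m := le_min M.cast_nonneg Hv.cast_nonneg
  have ht0 : 0 ≤ t := by positivity
  have htθ : t ≤ θ := by
    rw [div_le_iff₀ hHv']
    calc θc * m = θ * (θc / θ * m) := by field_simp
      _ ≤ θ * Hv := by gcongr
  have hrate : Hv * t = θc * m := mul_div_cancel₀ _ hHv'.ne'
  have htM : Hv * t ≤ M :=
    hrate.trans_le ((mul_le_of_le_one_left hm0 hθc1).trans (min_le_left _ _))
  have hcap : ∀ k, pathCap ℓ (p k) = 1 := fun k =>
    pathCap_eq_one (hpaths _ (hpPs k)).1 fun e he => hℓ e ((hpaths _ (hpPs k)).2 he)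
  exact ⟨feasibleM_uniformSchedule hℓ hpPs hldisj hcap (fun k => hsimple _ (hpPs k))
      hvdisj ht0 (htθ.trans hθle) htM,
    passiveOK_uniformSchedule hℓ hpPs hldisj hcap hθpos.le htθ,
    (netRate_uniformSchedule hpPs hinj hcap).trans hrate⟩

/-- Theorem 1, M > 1: with unit link capacities and uniform threshold θ,
given `H_v` pairwise internally vertex-disjoint (hence link-disjoint) paths and
`θ_c ∈ [0,1]` with `H_v ≥ (θ_c/θ)·min(M,H_v)`, the schedule giving each of these paths
activation time `θ_c·min(M,H_v)/H_v` is 1-2-1 feasible for parameter M, satisfies the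
passive-user constraint, and has rate `θ_c·min(M,H_v)`. -/
theorem stmt10 (Nrelay : ℕ) (E : Finset Link) (hE : E.Nonempty) (ℓ : Link → ℝ)
    (hℓ : ∀ e ∈ E, ℓ e = 1) (Ps : Finset (Finset Link)) (hPs : Ps.Nonempty)
    (hpaths : ∀ q ∈ Ps, q.Nonempty ∧ q ⊆ E)
    (hsimple : ∀ q ∈ Ps, ∀ i : ℕ,
      ({e ∈ q | e.1 = i}).card ≤ 1 ∧ ({e ∈ q | e.2 = i}).card ≤ 1)
    (θ : ℝ) (hθpos : 0 < θ) (hθle : θ ≤ 1)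
    (M : ℕ) (hM : 1 ≤ M)
    (Hv : ℕ) (hHv : 0 < Hv) (p : Fin Hv → Finset Link)
    (hpPs : ∀ k, p k ∈ Ps) (hinj : Function.Injective p)
    (hvdisj : ∀ k l, k ≠ l → ∀ v : ℕ, v ≠ 0 → v ≠ Nrelay + 1 →
      ¬(nodeIn v (p k) ∧ nodeIn v (p l)))
    (hldisj : ∀ k l, k ≠ l → Disjoint (p k) (p l))
    (θc : ℝ) (hθc0 : 0 ≤ θc) (hθc1 : θc ≤ 1)
    (hbound : θc / θ * (min M Hv : ℝ) ≤ (Hv : ℝ)) :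
    FeasibleM Nrelay M E ℓ Ps
      (fun q => if ∃ k, q = p k then θc * (min M Hv : ℝ) / (Hv : ℝ) else 0) ∧
    PassiveOK E ℓ Ps (fun _ => θ)
      (fun q => if ∃ k, q = p k then θc * (min M Hv : ℝ) / (Hv : ℝ) else 0) ∧
    netRate ℓ Ps
      (fun q => if ∃ k, q = p k then θc * (min M Hv : ℝ) / (Hv : ℝ) else 0)
      = θc * (min M Hv : ℝ) :=
  stmt10_general Nrelay E ℓ hℓ Ps hpaths hsimple θ hθpos hθle M Hv hHv p hpPs hinj hvdisj hldisj θc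
    hθc0 hθc1 hbound
end

section
/- (Extension of Theorem 1 to per-link thresholds, M = 1) Assume unit link capacities (ℓ_{ji} = 1 for every link, so C_p = 1 for every path) and per-link thresholds θ_{ji} ∈ (0,1], and let θ̂ = min over all links of θ_{ji}. Let p_1, …, p_{H_e} ∈ 𝒫 be pairwise link-disjoint source–destination paths and let θ_c ∈ [0,1] satisfy H_e ≥ θ_c/θ̂. Then the schedule assigning activation time θ_c/H_e to each of p_1, …, p_{H_e} and 0 to every other path is 1-2-1 feasible (M = 1), satisfies the passive-user constraint, and has rate θ_c. -/
/-!
Common formalization of 1-2-1 mmWave networks (Dogan–Cardone–Fragouli).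
A link is a directed edge `(i, j)` between natural-number node labels.
A path is identified with its (finite, nonempty) set of links.
-/

open Finset

/-!
With unit capacities every path has capacity 1, so the activation time of a link is the total
time of the scheduled paths through it and the rate is the total scheduled time. Counting the
links leaving (or entering) a node path by path, a simple path contributes at most one of them,
so each node constraint is bounded by the rate `θc ≤ 1`. Since the chosen paths are link-disjoint,
a link lies on at most one of them, so its activation time is at most `θc / He ≤ θ̂ ≤ θ e`.
-/

lemma pathInf_eq_of_forall_eq {f : Link → ℝ} {q : Finset Link} {c : ℝ} (hq : q.Nonempty)
    (hf : ∀ e ∈ q, f e = c) : pathInf f q = c := by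
  rw [pathInf, dif_pos hq, Finset.inf'_congr hq rfl hf, Finset.inf'_const]

section UnitCapacities

variable {ℓ : Link → ℝ} {Ps : Finset (Finset Link)}

lemma linkTime_eq_sum_of_unit (hne : ∀ q ∈ Ps, q.Nonempty)
    (hunit : ∀ q ∈ Ps, ∀ e ∈ q, ℓ e = 1) (x : Finset Link → ℝ) (e : Link) :
    linkTime ℓ Ps x e = ∑ q ∈ Ps with e ∈ q, x q := by
  refine Finset.sum_congr rfl fun q hq => ?_
  obtain ⟨hqPs, heq⟩ := Finset.mem_filter.mp hq
  rw [pathCap, pathInf_eq_of_forall_eq (hne q hqPs) (hunit q hqPs), hunit q hqPs e heq,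
    mul_one, div_one]

lemma netRate_eq_sum_of_unit (hne : ∀ q ∈ Ps, q.Nonempty)
    (hunit : ∀ q ∈ Ps, ∀ e ∈ q, ℓ e = 1) (x : Finset Link → ℝ) :
    netRate ℓ Ps x = ∑ q ∈ Ps, x q :=
  Finset.sum_congr rfl fun q hq => by
    rw [pathCap, pathInf_eq_of_forall_eq (hne q hq) (hunit q hq), mul_one]

lemma sum_linkTime_le_netRate_of_unit (hne : ∀ q ∈ Ps, q.Nonempty)
    (hunit : ∀ q ∈ Ps, ∀ e ∈ q, ℓ e = 1) {E : Finset Link} (hsub : ∀ q ∈ Ps, q ⊆ E)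
    (P : Link → Prop) [DecidablePred P] (hP : ∀ q ∈ Ps, #{e ∈ q | P e} ≤ 1)
    {x : Finset Link → ℝ} (hx : ∀ q ∈ Ps, 0 ≤ x q) :
    ∑ e ∈ E with P e, linkTime ℓ Ps x e ≤ netRate ℓ Ps x := by
  have hcount : ∑ e ∈ E with P e, ∑ q ∈ Ps with e ∈ q, x q = ∑ q ∈ Ps, ∑ e ∈ q with P e, x q :=
    Finset.sum_comm' fun e q => by
      simp only [Finset.mem_filter]
      exact ⟨fun ⟨⟨_, hPe⟩, hq, he⟩ => ⟨⟨he, hPe⟩, hq⟩,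
        fun ⟨⟨he, hPe⟩, hq⟩ => ⟨⟨hsub q hq he, hPe⟩, hq, he⟩⟩
  simp only [linkTime_eq_sum_of_unit hne hunit, netRate_eq_sum_of_unit hne hunit, hcount,
    Finset.sum_const, nsmul_eq_mul]
  refine Finset.sum_le_sum fun q hq => ?_
  exact mul_le_of_le_one_left (hx q hq) (by exact_mod_cast hP q hq)

end UnitCapacities

def equalShare {n : ℕ} (p : Fin n → Finset Link) (c : ℝ) (q : Finset Link) : ℝ :=
  if ∃ k, q = p k then c else 0

section EqualShare

variable {n : ℕ} {p : Fin n → Finset Link} {c : ℝ}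

lemma equalShare_nonneg (hc : 0 ≤ c) (q : Finset Link) : 0 ≤ equalShare p c q := by
  unfold equalShare
  split_ifs
  exacts [hc, le_rfl]

lemma sum_filter_mem_equalShare_le (hdisj : ∀ k l, k ≠ l → Disjoint (p k) (p l)) (hc : 0 ≤ c)
    (Ps : Finset (Finset Link)) (e : Link) :
    ∑ q ∈ Ps with e ∈ q, equalShare p c q ≤ c := by
  have hat_most_one : #{q ∈ {q ∈ Ps | e ∈ q} | ∃ k, q = p k} ≤ 1 := by
    refine Finset.card_le_one.mpr fun a ha b hb => ?_
    simp only [Finset.mem_filter] at ha hb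
    obtain ⟨⟨_, hea⟩, k, rfl⟩ := ha
    obtain ⟨⟨_, heb⟩, l, rfl⟩ := hb
    by_contra hkl
    exact Finset.disjoint_left.mp (hdisj k l (ne_of_apply_ne p hkl)) hea heb
  simp only [equalShare]
  rw [← Finset.sum_filter, Finset.sum_const, nsmul_eq_mul]
  exact mul_le_of_le_one_left hc (by exact_mod_cast hat_most_one)

lemma sum_equalShare (hinj : Function.Injective p) {Ps : Finset (Finset Link)}
    (hpPs : ∀ k, p k ∈ Ps) : ∑ q ∈ Ps, equalShare p c q = n * c := by
  have hactive : {q ∈ Ps | ∃ k, q = p k} = Finset.univ.image p := by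
    ext q
    simp only [Finset.mem_filter, Finset.mem_image, Finset.mem_univ, true_and]
    exact ⟨fun ⟨_, k, hk⟩ => ⟨k, hk.symm⟩, fun ⟨k, hk⟩ => ⟨hk ▸ hpPs k, k, hk.symm⟩⟩
  simp only [equalShare]
  rw [← Finset.sum_filter, hactive, Finset.sum_const,
    Finset.card_image_of_injective _ hinj, Finset.card_univ, Fintype.card_fin, nsmul_eq_mul]

end EqualShare

theorem stmt15_general (E : Finset Link) (hE : E.Nonempty) (ℓ θ : Link → ℝ)
    (hℓ : ∀ e ∈ E, ℓ e = 1) (Ps : Finset (Finset Link))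
    (hpaths : ∀ q ∈ Ps, q.Nonempty ∧ q ⊆ E)
    (hsimple : ∀ q ∈ Ps, ∀ i : ℕ,
      ({e ∈ q | e.1 = i}).card ≤ 1 ∧ ({e ∈ q | e.2 = i}).card ≤ 1)
    (hθ : ∀ e ∈ E, 0 < θ e ∧ θ e ≤ 1)
    (He : ℕ) (hHe : 0 < He) (p : Fin He → Finset Link)
    (hpPs : ∀ k, p k ∈ Ps) (hinj : Function.Injective p)
    (hdisj : ∀ k l, k ≠ l → Disjoint (p k) (p l))
    (θc : ℝ) (hθc0 : 0 ≤ θc) (hθc1 : θc ≤ 1)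
    (hbound : θc / E.inf' hE θ ≤ (He : ℝ)) :
    Feasible1 E ℓ Ps (fun q => if ∃ k, q = p k then θc / (He : ℝ) else 0) ∧
    PassiveOK E ℓ Ps θ (fun q => if ∃ k, q = p k then θc / (He : ℝ) else 0) ∧
    netRate ℓ Ps (fun q => if ∃ k, q = p k then θc / (He : ℝ) else 0) = θc := by
  change Feasible1 E ℓ Ps (equalShare p _) ∧ PassiveOK E ℓ Ps θ (equalShare p _) ∧
    netRate ℓ Ps (equalShare p _) = θc
  have hne q hq := (hpaths q hq).1
  have hunit q hq e he := hℓ e ((hpaths q hq).2 he)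
  have hHe' : (0 : ℝ) < He := Nat.cast_pos.mpr hHe
  have hc0 : 0 ≤ θc / He := div_nonneg hθc0 hHe'.le
  have hrate : netRate ℓ Ps (equalShare p (θc / He)) = θc := by
    rw [netRate_eq_sum_of_unit hne hunit, sum_equalShare hinj hpPs, mul_div_cancel₀ _ hHe'.ne']
  have hc_le_θ e (he : e ∈ E) : θc / He ≤ θ e := by
    obtain ⟨e₀, he₀, hmin⟩ := Finset.exists_mem_eq_inf' hE θ
    have hθhat : 0 < E.inf' hE θ := hmin ▸ (hθ e₀ he₀).1
    calc θc / He ≤ E.inf' hE θ := by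
          rw [div_le_iff₀ hHe', mul_comm, ← div_le_iff₀ hθhat]; exact hbound
      _ ≤ θ e := Finset.inf'_le θ he
  have hnode (P : Link → Prop) [DecidablePred P] (hP : ∀ q ∈ Ps, #{e ∈ q | P e} ≤ 1) :
      ∑ e ∈ E with P e, linkTime ℓ Ps (equalShare p (θc / He)) e ≤ 1 :=
    hrate ▸ sum_linkTime_le_netRate_of_unit hne hunit (fun q hq => (hpaths q hq).2) P hP
      (fun q _ => equalShare_nonneg hc0 q) |>.trans hθc1
  refine ⟨⟨fun q _ => equalShare_nonneg hc0 q, fun i => hnode _ fun q hq => (hsimple q hq i).1,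
    fun i => hnode _ fun q hq => (hsimple q hq i).2⟩, fun e he => ?_, hrate⟩
  rw [linkTime_eq_sum_of_unit hne hunit]
  exact (sum_filter_mem_equalShare_le hdisj hc0 Ps e).trans (hc_le_θ e he)

/-- extension of Theorem 1 to per-link thresholds, M = 1: with unit link
capacities and per-link thresholds `θ` with minimum `θ̂`, given `H_e` pairwise
link-disjoint paths and `θ_c ∈ [0,1]` with `H_e ≥ θ_c/θ̂`, equal time sharing `θ_c/H_e`
over these paths is 1-2-1 feasible, satisfies the passive-user constraint, and
achieves rate `θ_c`. -/
theorem stmt15 (E : Finset Link) (hE : E.Nonempty) (ℓ θ : Link → ℝ)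
    (hℓ : ∀ e ∈ E, ℓ e = 1) (Ps : Finset (Finset Link)) (hPs : Ps.Nonempty)
    (hpaths : ∀ q ∈ Ps, q.Nonempty ∧ q ⊆ E)
    (hsimple : ∀ q ∈ Ps, ∀ i : ℕ,
      ({e ∈ q | e.1 = i}).card ≤ 1 ∧ ({e ∈ q | e.2 = i}).card ≤ 1)
    (hθ : ∀ e ∈ E, 0 < θ e ∧ θ e ≤ 1)
    (He : ℕ) (hHe : 0 < He) (p : Fin He → Finset Link)
    (hpPs : ∀ k, p k ∈ Ps) (hinj : Function.Injective p)
    (hdisj : ∀ k l, k ≠ l → Disjoint (p k) (p l))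
    (θc : ℝ) (hθc0 : 0 ≤ θc) (hθc1 : θc ≤ 1)
    (hbound : θc / E.inf' hE θ ≤ (He : ℝ)) :
    Feasible1 E ℓ Ps (fun q => if ∃ k, q = p k then θc / (He : ℝ) else 0) ∧
    PassiveOK E ℓ Ps θ (fun q => if ∃ k, q = p k then θc / (He : ℝ) else 0) ∧
    netRate ℓ Ps (fun q => if ∃ k, q = p k then θc / (He : ℝ) else 0) = θc :=
  stmt15_general E hE ℓ θ hℓ Ps hpaths hsimple hθ He hHe p hpPs hinj hdisj θc hθc0 hθc1 hbound
end
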